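/- Suppose an algorithm draws i.i.d. samples from a distribution with CDF F whose support maximum is μ*, terminates at a random time T with E[T] finite, and returns the maximum observed sample V. Under hypothesis H₀ all samples lie in (−∞, μ*] almost surely. If under H₀ the event B^C = {V > μ*} has P₀(B^C) = 0 and P₀(T ≤ 4t) ≥ 3/4, then for any alternative hypothesis H₁ whose likelihood ratio on histories of length N contained in (−∞, μ*]^N is at least γ^N (γ ∈ (0,1)), one has P₁(V ≤ μ*) ≥ (3/4)·γ^{4t}. -/
import Mathlib


open MeasureTheory

/-- Abstract lower-bound mechanism: if under `H₀` the returned value `V` never exceeds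
`μ*` and `P₀ (T ≤ 4t) ≥ 3/4`, and under `H₁` the likelihood ratio on histories of length
`N` lying in `(-∞, μ*]` is at least `γ ^ N`, then `P₁ (V ≤ μ*) ≥ (3/4) * γ ^ (4t)`. -/
theorem lower_bound_mechanism {Ω : Type*} [MeasurableSpace Ω]
    (P₀ P₁ : Measure Ω) [IsProbabilityMeasure P₀] [IsProbabilityMeasure P₁]
    (T : Ω → ℕ) (V : Ω → ℝ) (hT : Measurable T) (hV : Measurable V)
    (μstar t γ : ℝ) (ht : 0 < t) (hγ0 : 0 < γ) (hγ1 : γ < 1)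
    (hB : P₀ {ω | μstar < V ω} = 0)
    (hTbound : ENNReal.ofReal (3 / 4) ≤ P₀ {ω | (T ω : ℝ) ≤ 4 * t})
    (hLR : ∀ ω, V ω ≤ μstar → (T ω : ℝ) ≤ 4 * t →
      ENNReal.ofReal (γ ^ (T ω)) ≤ P₁.rnDeriv P₀ ω) :
    ENNReal.ofReal ((3 / 4) * γ ^ ((4 : ℝ) * t)) ≤ P₁ {ω | V ω ≤ μstar} := by
  set S : Set Ω := {ω | V ω ≤ μstar} with hS
  set A : Set Ω := S ∩ {ω | (T ω : ℝ) ≤ 4 * t} with hA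
  have hSm : MeasurableSet S := measurableSet_le hV measurable_const
  have hTm : MeasurableSet {ω | (T ω : ℝ) ≤ 4 * t} :=
    measurableSet_le (measurable_from_nat.comp hT : Measurable fun ω => ((T ω : ℝ))) measurable_const
  have hAm : MeasurableSet A := hSm.inter hTm
  -- P₀ A ≥ 3/4
  have hP0A : ENNReal.ofReal (3 / 4) ≤ P₀ A := by
    have hdiff : P₀ ({ω | (T ω : ℝ) ≤ 4 * t} \ S) = 0 := by
      refine measure_mono_null ?_ hB
      intro ω hω
      simpa [hS, not_le] using hω.2
    calc ENNReal.ofReal (3 / 4) ≤ P₀ {ω | (T ω : ℝ) ≤ 4 * t} := hTbound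
      _ ≤ P₀ A + P₀ ({ω | (T ω : ℝ) ≤ 4 * t} \ S) := by
          refine (measure_mono ?_).trans (measure_union_le _ _)
          intro ω hω
          by_cases h : ω ∈ S
          · exact Or.inl ⟨h, hω⟩
          · exact Or.inr ⟨hω, h⟩
      _ = P₀ A := by rw [hdiff, add_zero]
  -- pointwise bound on A
  have hpt : ∀ ω ∈ A, ENNReal.ofReal (γ ^ ((4 : ℝ) * t)) ≤ P₁.rnDeriv P₀ ω := by
    intro ω hω
    refine le_trans ?_ (hLR ω hω.1 hω.2)
    apply ENNReal.ofReal_le_ofReal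
    calc γ ^ ((4 : ℝ) * t) ≤ γ ^ ((T ω : ℕ) : ℝ) :=
          Real.rpow_le_rpow_of_exponent_ge hγ0 hγ1.le hω.2
      _ = γ ^ (T ω) := Real.rpow_natCast γ (T ω)
  have key : ENNReal.ofReal (γ ^ ((4 : ℝ) * t)) * P₀ A ≤ P₁ S := by
    have h1 : ENNReal.ofReal (γ ^ ((4 : ℝ) * t)) * P₀ A
        ≤ ∫⁻ ω in A, P₁.rnDeriv P₀ ω ∂P₀ := by
      rw [← MeasureTheory.setLIntegral_const]
      exact setLIntegral_mono_ae (P₁.measurable_rnDeriv P₀).aemeasurable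
        (Filter.Eventually.of_forall hpt)
    have h2 : ∫⁻ ω in A, P₁.rnDeriv P₀ ω ∂P₀ ≤ ∫⁻ ω in S, P₁.rnDeriv P₀ ω ∂P₀ :=
      lintegral_mono_set Set.inter_subset_left
    have h3 : ∫⁻ ω in S, P₁.rnDeriv P₀ ω ∂P₀ ≤ P₁ S := by
      have := Measure.withDensity_rnDeriv_le P₁ P₀
      have h4 := this S
      rwa [withDensity_apply _ hSm] at h4
    exact h1.trans (h2.trans h3)
  calc ENNReal.ofReal ((3 / 4) * γ ^ ((4 : ℝ) * t))
      = ENNReal.ofReal (γ ^ ((4 : ℝ) * t)) * ENNReal.ofReal (3 / 4) := by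
        rw [← ENNReal.ofReal_mul (by positivity), mul_comm]
    _ ≤ ENNReal.ofReal (γ ^ ((4 : ℝ) * t)) * P₀ A :=
        mul_le_mul_right hP0A _
    _ ≤ P₁ S := key
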